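/- Upward composition of 3-tracks is well defined: let J₁, J₁', J₂, J₂' be good 3-paths in M with J₁(1,·,·) = J₂(0,·,·) and J₁'(1,·,·) = J₂'(0,·,·); if W₁ is a rank-3 homotopy from J₁ to J₁', W₂ is a rank-3 homotopy from J₂ to J₂', and W₁(q,1,·,·) = W₂(q,0,·,·) for all q ∈ ℝ, then J₁*J₂ and J₁'*J₂' are good 3-paths and J₁*J₂ is rank-3 homotopic to J₁'*J₂'. -/

import Mathlib

open scoped Manifold

variable (E : Type*) [NormedAddCommGroup E] [NormedSpace ℝ E] [FiniteDimensional ℝ E]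
variable {M : Type*} [TopologicalSpace M] [ChartedSpace E M]
  [IsManifold 𝓘(ℝ, E) (⊤ : ℕ∞) M]

/-- A 1-path in `M`: a smooth map `ℝ → M` that is constant near `(-∞, 0]` and near
`[1, ∞)` (in the sense of the `ε`-conditions). -/
def IsOnePath (γ : ℝ → M) : Prop :=
  ContMDiff 𝓘(ℝ, ℝ) 𝓘(ℝ, E) (⊤ : ℕ∞) γ ∧
    ∃ ε > (0 : ℝ), (∀ t ≤ ε, γ t = γ 0) ∧ (∀ t, 1 - ε ≤ t → γ t = γ 1)

/-- A 2-path in `M`, as a smooth map `ℝ × ℝ → M` with coordinates `(s, t)`,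
constant near the boundary in each variable, whose images at `t = 0` and `t = 1`
are single points. -/
def IsTwoPath (g : ℝ × ℝ → M) : Prop :=
  ContMDiff 𝓘(ℝ, ℝ × ℝ) 𝓘(ℝ, E) (⊤ : ℕ∞) g ∧
    (∃ ε > (0 : ℝ),
      (∀ s t, s ≤ ε → g (s, t) = g (0, t)) ∧
      (∀ s t, 1 - ε ≤ s → g (s, t) = g (1, t)) ∧
      (∀ s t, t ≤ ε → g (s, t) = g (s, 0)) ∧
      (∀ s t, 1 - ε ≤ t → g (s, t) = g (s, 1))) ∧
    (∀ s s', g (s, 0) = g (s', 0)) ∧ (∀ s s', g (s, 1) = g (s', 1))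

/-- A rank-1 homotopy: a 2-path whose differential has rank at most 1 at every point. -/
def IsRank1Homotopy (h : ℝ × ℝ → M) : Prop :=
  IsTwoPath E h ∧
    ∀ p : ℝ × ℝ,
      Module.finrank ℝ
        (LinearMap.range (mfderiv 𝓘(ℝ, ℝ × ℝ) 𝓘(ℝ, E) h p).toLinearMap) ≤ 1

/-- Two 1-paths are rank-1 homotopic if they are joined by a rank-1 homotopy. -/
def Rank1Homotopic (γ γ' : ℝ → M) : Prop :=
  ∃ h : ℝ × ℝ → M, IsRank1Homotopy E h ∧ (∀ t, h (0, t) = γ t) ∧ (∀ t, h (1, t) = γ' t)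

/-- A 3-path in `M`, as a smooth map `ℝ × ℝ × ℝ → M` with coordinates `(r, s, t)`. -/
def IsThreePath (α : ℝ × ℝ × ℝ → M) : Prop :=
  ContMDiff 𝓘(ℝ, ℝ × ℝ × ℝ) 𝓘(ℝ, E) (⊤ : ℕ∞) α ∧
    (∃ ε > (0 : ℝ),
      (∀ r s t, r ≤ ε → α (r, s, t) = α (0, s, t)) ∧
      (∀ r s t, 1 - ε ≤ r → α (r, s, t) = α (1, s, t)) ∧
      (∀ r s t, s ≤ ε → α (r, s, t) = α (r, 0, t)) ∧
      (∀ r s t, 1 - ε ≤ s → α (r, s, t) = α (r, 1, t)) ∧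
      (∀ r s t, t ≤ ε → α (r, s, t) = α (r, s, 0)) ∧
      (∀ r s t, 1 - ε ≤ t → α (r, s, t) = α (r, s, 1))) ∧
    (∀ r s r' s', α (r, s, 0) = α (r', s', 0)) ∧
    (∀ r s r' s', α (r, s, 1) = α (r', s', 1))

/-- A rank-2 homotopy: a 3-path whose differential has rank at most 2 at every point and
whose restrictions to `s = 0` and `s = 1` are rank-1 homotopies. -/
def IsRank2Homotopy (α : ℝ × ℝ × ℝ → M) : Prop :=
  IsThreePath E α ∧
    (∀ p : ℝ × ℝ × ℝ,
      Module.finrank ℝ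
        (LinearMap.range (mfderiv 𝓘(ℝ, ℝ × ℝ × ℝ) 𝓘(ℝ, E) α p).toLinearMap) ≤ 2) ∧
    IsRank1Homotopy E (fun p : ℝ × ℝ => α (p.1, 0, p.2)) ∧
    IsRank1Homotopy E (fun p : ℝ × ℝ => α (p.1, 1, p.2))

/-- `α` is a rank-2 homotopy from the 2-path `g` to the 2-path `g'`. -/
def Rank2HomotopyFrom (α : ℝ × ℝ × ℝ → M) (g g' : ℝ × ℝ → M) : Prop :=
  IsRank2Homotopy E α ∧ (∀ s t, α (0, s, t) = g (s, t)) ∧ (∀ s t, α (1, s, t) = g' (s, t))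

/-- Two 2-paths are rank-2 homotopic if they are joined by a rank-2 homotopy. -/
def Rank2Homotopic (g g' : ℝ × ℝ → M) : Prop :=
  ∃ α : ℝ × ℝ × ℝ → M, Rank2HomotopyFrom E α g g'

/-- The laminatedness condition for a map `ℝ × ℝ × ℝ → M` with coordinates `(r, s, t)`,
expressed via the partial derivatives (the images of the coordinate vectors under the
differential). -/
def IsLaminated (α : ℝ × ℝ × ℝ → M) : Prop :=
  ∀ r s : ℝ,
    (∀ t : ℝ, ∃ a b : ℝ, (a, b) ≠ (0, 0) ∧
        a • mfderiv 𝓘(ℝ, ℝ × ℝ × ℝ) 𝓘(ℝ, E) α (r, s, t) (1, 0, 0) +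
          b • mfderiv 𝓘(ℝ, ℝ × ℝ × ℝ) 𝓘(ℝ, E) α (r, s, t) (0, 0, 1) = 0) ∨
    (∀ t : ℝ, ∃ a b : ℝ, (a, b) ≠ (0, 0) ∧
        a • mfderiv 𝓘(ℝ, ℝ × ℝ × ℝ) 𝓘(ℝ, E) α (r, s, t) (0, 1, 0) +
          b • mfderiv 𝓘(ℝ, ℝ × ℝ × ℝ) 𝓘(ℝ, E) α (r, s, t) (0, 0, 1) = 0) ∨
    (∃ a b : ℝ, (a, b) ≠ (0, 0) ∧ ∀ t : ℝ,
        a • mfderiv 𝓘(ℝ, ℝ × ℝ × ℝ) 𝓘(ℝ, E) α (r, s, t) (1, 0, 0) +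
          b • mfderiv 𝓘(ℝ, ℝ × ℝ × ℝ) 𝓘(ℝ, E) α (r, s, t) (0, 1, 0) = 0)

/-- A laminated rank-2 homotopy. -/
def IsLaminatedRank2Homotopy (α : ℝ × ℝ × ℝ → M) : Prop :=
  IsRank2Homotopy E α ∧ IsLaminated E α

/-- Two 2-paths are laminated rank-2 homotopic if they are joined by a laminated
rank-2 homotopy. -/
def LamRank2Homotopic (g g' : ℝ × ℝ → M) : Prop :=
  ∃ α : ℝ × ℝ × ℝ → M, IsLaminatedRank2Homotopy E α ∧
    (∀ s t, α (0, s, t) = g (s, t)) ∧ (∀ s t, α (1, s, t) = g' (s, t))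

/-- A good 3-path: a 3-path `J` such that `J (r, 0, t)` and `J (r, 1, t)` do not
depend on `r`. -/
def IsGoodThreePath (J : ℝ × ℝ × ℝ → M) : Prop :=
  IsThreePath E J ∧ (∀ r r' t, J (r, 0, t) = J (r', 0, t)) ∧
    (∀ r r' t, J (r, 1, t) = J (r', 1, t))

/-- A 4-path in `M`, as a smooth map `ℝ × ℝ × ℝ × ℝ → M` with coordinates `(q, r, s, t)`. -/
def IsFourPath (W : ℝ × ℝ × ℝ × ℝ → M) : Prop :=
  ContMDiff 𝓘(ℝ, ℝ × ℝ × ℝ × ℝ) 𝓘(ℝ, E) (⊤ : ℕ∞) W ∧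
    (∃ ε > (0 : ℝ),
      (∀ q r s t, q ≤ ε → W (q, r, s, t) = W (0, r, s, t)) ∧
      (∀ q r s t, 1 - ε ≤ q → W (q, r, s, t) = W (1, r, s, t)) ∧
      (∀ q r s t, r ≤ ε → W (q, r, s, t) = W (q, 0, s, t)) ∧
      (∀ q r s t, 1 - ε ≤ r → W (q, r, s, t) = W (q, 1, s, t)) ∧
      (∀ q r s t, s ≤ ε → W (q, r, s, t) = W (q, r, 0, t)) ∧
      (∀ q r s t, 1 - ε ≤ s → W (q, r, s, t) = W (q, r, 1, t)) ∧
      (∀ q r s t, t ≤ ε → W (q, r, s, t) = W (q, r, s, 0)) ∧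
      (∀ q r s t, 1 - ε ≤ t → W (q, r, s, t) = W (q, r, s, 1))) ∧
    (∀ q r s q' r' s', W (q, r, s, 0) = W (q', r', s', 0)) ∧
    (∀ q r s q' r' s', W (q, r, s, 1) = W (q', r', s', 1))

/-- A rank-3 homotopy: a 4-path whose differential has rank at most 3 at every point,
whose restrictions to `r = 0` and `r = 1` are laminated rank-2 homotopies, and whose
restrictions to `s = 0` and `s = 1` are independent of `r` and are rank-1 homotopies. -/
def IsRank3Homotopy (W : ℝ × ℝ × ℝ × ℝ → M) : Prop :=
  IsFourPath E W ∧
    (∀ p : ℝ × ℝ × ℝ × ℝ,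
      Module.finrank ℝ
        (LinearMap.range (mfderiv 𝓘(ℝ, ℝ × ℝ × ℝ × ℝ) 𝓘(ℝ, E) W p).toLinearMap) ≤ 3) ∧
    IsLaminatedRank2Homotopy E (fun p : ℝ × ℝ × ℝ => W (p.1, 0, p.2.1, p.2.2)) ∧
    IsLaminatedRank2Homotopy E (fun p : ℝ × ℝ × ℝ => W (p.1, 1, p.2.1, p.2.2)) ∧
    (∀ q r r' t, W (q, r, 0, t) = W (q, r', 0, t)) ∧
    (∀ q r r' t, W (q, r, 1, t) = W (q, r', 1, t)) ∧
    IsRank1Homotopy E (fun p : ℝ × ℝ => W (p.1, 0, 0, p.2)) ∧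
    IsRank1Homotopy E (fun p : ℝ × ℝ => W (p.1, 0, 1, p.2))

/-- `W` is a rank-3 homotopy from the good 3-path `J` to the good 3-path `J'`. -/
def Rank3HomotopyFrom (W : ℝ × ℝ × ℝ × ℝ → M) (J J' : ℝ × ℝ × ℝ → M) : Prop :=
  IsRank3Homotopy E W ∧ (∀ r s t, W (0, r, s, t) = J (r, s, t)) ∧
    (∀ r s t, W (1, r, s, t) = J' (r, s, t))

/-- Two good 3-paths are rank-3 homotopic if they are joined by a rank-3 homotopy. -/
def Rank3Homotopic (J J' : ℝ × ℝ × ℝ → M) : Prop :=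
  ∃ W : ℝ × ℝ × ℝ × ℝ → M, Rank3HomotopyFrom E W J J'

/-- Upward composition of 3-paths. -/
noncomputable def upComp (J K : ℝ × ℝ × ℝ → M) : ℝ × ℝ × ℝ → M := fun p =>
  if p.1 ≤ 1 / 2 then J (2 * p.1, p.2.1, p.2.2) else K (2 * p.1 - 1, p.2.1, p.2.2)

open scoped Topology

/-! Glue the two homotopies along `r = 1/2`. Both are constant in `r` near the seam and agree
there, so near every point the glued map is `W₁` or `W₂` precomposed with an affine
reparametrisation of `r`; hence it is smooth and its differential has rank at most 3. Every other
condition of a rank-3 homotopy holds slicewise in `(q, s, t)` or is inherited from `W₁` at `r = 0`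
and from `W₂` at `r = 1`. The end slices `q = 0, 1` are `J₁ * J₂` and `J₁' * J₂'`, which are
therefore good 3-paths. -/

section UpComp4

variable {X : Type*}

/-- The `ε`-conditions of `IsFourPath`. -/
def IsCollared (ε : ℝ) (W : ℝ × ℝ × ℝ × ℝ → X) : Prop :=
  (∀ q r s t, q ≤ ε → W (q, r, s, t) = W (0, r, s, t)) ∧
    (∀ q r s t, 1 - ε ≤ q → W (q, r, s, t) = W (1, r, s, t)) ∧
    (∀ q r s t, r ≤ ε → W (q, r, s, t) = W (q, 0, s, t)) ∧
    (∀ q r s t, 1 - ε ≤ r → W (q, r, s, t) = W (q, 1, s, t)) ∧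
    (∀ q r s t, s ≤ ε → W (q, r, s, t) = W (q, r, 0, t)) ∧
    (∀ q r s t, 1 - ε ≤ s → W (q, r, s, t) = W (q, r, 1, t)) ∧
    (∀ q r s t, t ≤ ε → W (q, r, s, t) = W (q, r, s, 0)) ∧
    (∀ q r s t, 1 - ε ≤ t → W (q, r, s, t) = W (q, r, s, 1))

theorem IsCollared.mono {ε ε' : ℝ} {W : ℝ × ℝ × ℝ × ℝ → X} (h : IsCollared ε W)
    (hε : ε' ≤ ε) : IsCollared ε' W := by
  obtain ⟨hq₀, hq₁, hr₀, hr₁, hs₀, hs₁, ht₀, ht₁⟩ := h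
  exact ⟨fun q r s t h ↦ hq₀ q r s t (h.trans hε), fun q r s t h ↦ hq₁ q r s t (by linarith),
    fun q r s t h ↦ hr₀ q r s t (h.trans hε), fun q r s t h ↦ hr₁ q r s t (by linarith),
    fun q r s t h ↦ hs₀ q r s t (h.trans hε), fun q r s t h ↦ hs₁ q r s t (by linarith),
    fun q r s t h ↦ ht₀ q r s t (h.trans hε), fun q r s t h ↦ ht₁ q r s t (by linarith)⟩

noncomputable def upComp4 (W₁ W₂ : ℝ × ℝ × ℝ × ℝ → X) : ℝ × ℝ × ℝ × ℝ → X :=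
  fun p ↦ upComp (fun x ↦ W₁ (p.1, x)) (fun x ↦ W₂ (p.1, x)) p.2

variable {W₁ W₂ : ℝ × ℝ × ℝ × ℝ → X}

theorem upComp4_of_le {q r s t : ℝ} (hr : r ≤ 1 / 2) :
    upComp4 W₁ W₂ (q, r, s, t) = W₁ (q, 2 * r, s, t) :=
  if_pos hr

theorem upComp4_of_lt {q r s t : ℝ} (hr : 1 / 2 < r) :
    upComp4 W₁ W₂ (q, r, s, t) = W₂ (q, 2 * r - 1, s, t) :=
  if_neg hr.not_ge

@[simp]
theorem upComp4_zero (q s t : ℝ) : upComp4 W₁ W₂ (q, 0, s, t) = W₁ (q, 0, s, t) := by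
  rw [upComp4_of_le (by norm_num), mul_zero]

@[simp]
theorem upComp4_one (q s t : ℝ) : upComp4 W₁ W₂ (q, 1, s, t) = W₂ (q, 1, s, t) := by
  rw [upComp4_of_lt (by norm_num)]
  norm_num

theorem upComp4_congr {q q' r s s' t t' : ℝ} (h₁ : ∀ r, W₁ (q, r, s, t) = W₁ (q', r, s', t'))
    (h₂ : ∀ r, W₂ (q, r, s, t) = W₂ (q', r, s', t')) :
    upComp4 W₁ W₂ (q, r, s, t) = upComp4 W₁ W₂ (q', r, s', t') := by
  rcases le_or_gt r (1 / 2) with hr | hr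
  · rw [upComp4_of_le hr, upComp4_of_le hr, h₁]
  · rw [upComp4_of_lt hr, upComp4_of_lt hr, h₂]

theorem upComp4_eq_of_forall {q r s t : ℝ} {x : X} (hW : W₁ (q, 1, s, t) = W₂ (q, 0, s, t))
    (h₁ : ∀ r, W₁ (q, r, s, t) = x) (h₂ : ∀ r, W₂ (q, r, s, t) = W₂ (q, 0, s, t)) :
    upComp4 W₁ W₂ (q, r, s, t) = x := by
  rcases le_or_gt r (1 / 2) with hr | hr
  · rw [upComp4_of_le hr, h₁]
  · rw [upComp4_of_lt hr, h₂, ← hW, h₁]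

variable {ε : ℝ} (hc₁ : IsCollared ε W₁) (hc₂ : IsCollared ε W₂)
include hc₁ hc₂

theorem upComp4_isCollared (hε₀ : 0 ≤ ε) (hε : ε ≤ 1 / 2) :
    IsCollared (ε / 2) (upComp4 W₁ W₂) := by
  obtain ⟨hq₀₁, hq₁₁, -, -, hs₀₁, hs₁₁, ht₀₁, ht₁₁⟩ := hc₁.mono (half_le_self hε₀)
  obtain ⟨hq₀₂, hq₁₂, -, -, hs₀₂, hs₁₂, ht₀₂, ht₁₂⟩ := hc₂.mono (half_le_self hε₀)
  refine ⟨fun q r s t h ↦ upComp4_congr (fun r ↦ hq₀₁ q r s t h) (fun r ↦ hq₀₂ q r s t h),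
    fun q r s t h ↦ upComp4_congr (fun r ↦ hq₁₁ q r s t h) (fun r ↦ hq₁₂ q r s t h),
    fun q r s t h ↦ ?_, fun q r s t h ↦ ?_,
    fun q r s t h ↦ upComp4_congr (fun r ↦ hs₀₁ q r s t h) (fun r ↦ hs₀₂ q r s t h),
    fun q r s t h ↦ upComp4_congr (fun r ↦ hs₁₁ q r s t h) (fun r ↦ hs₁₂ q r s t h),
    fun q r s t h ↦ upComp4_congr (fun r ↦ ht₀₁ q r s t h) (fun r ↦ ht₀₂ q r s t h),
    fun q r s t h ↦ upComp4_congr (fun r ↦ ht₁₁ q r s t h) (fun r ↦ ht₁₂ q r s t h)⟩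
  · rw [upComp4_of_le (by linarith), upComp4_zero, hc₁.2.2.1 q _ s t (by linarith)]
  · rw [upComp4_of_lt (by linarith), upComp4_one, hc₂.2.2.2.1 q _ s t (by linarith)]

variable (hW : ∀ q s t, W₁ (q, 1, s, t) = W₂ (q, 0, s, t))
include hW

theorem upComp4_of_lt_add {q r s t : ℝ} (hr : 2 * r < 1 + ε) :
    upComp4 W₁ W₂ (q, r, s, t) = W₁ (q, 2 * r, s, t) := by
  rcases le_or_gt r (1 / 2) with hr' | hr'
  · exact upComp4_of_le hr'
  · rw [upComp4_of_lt hr', hc₂.2.2.1 q _ s t (by linarith), ← hW]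
    exact (hc₁.2.2.2.1 q _ s t (by linarith)).symm

theorem upComp4_of_sub_lt {q r s t : ℝ} (hr : 1 - ε < 2 * r) :
    upComp4 W₁ W₂ (q, r, s, t) = W₂ (q, 2 * r - 1, s, t) := by
  rcases le_or_gt r (1 / 2) with hr' | hr'
  · rw [upComp4_of_le hr', hc₁.2.2.2.1 q _ s t (by linarith), hW,
      hc₂.2.2.1 q (2 * r - 1) s t (by linarith)]
  · exact upComp4_of_lt hr'

theorem upComp4_eventuallyEq (hε : 0 < ε) (p : ℝ × ℝ × ℝ × ℝ) :
    upComp4 W₁ W₂ =ᶠ[𝓝 p] W₁ ∘ (fun x ↦ (x.1, 2 * x.2.1, x.2.2)) ∨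
      upComp4 W₁ W₂ =ᶠ[𝓝 p] W₂ ∘ (fun x ↦ (x.1, 2 * x.2.1 - 1, x.2.2)) := by
  have hcont : Continuous fun x : ℝ × ℝ × ℝ × ℝ ↦ 2 * x.2.1 := by fun_prop
  rcases lt_or_ge (2 * p.2.1) (1 + ε) with hp | hp
  · refine .inl <| Filter.eventuallyEq_of_mem
      ((isOpen_lt hcont continuous_const).mem_nhds hp) fun x hx ↦ ?_
    exact upComp4_of_lt_add hc₁ hc₂ hW hx
  · refine .inr <| Filter.eventuallyEq_of_mem
      ((isOpen_lt continuous_const hcont).mem_nhds (show 1 - ε < 2 * p.2.1 by linarith))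
      fun x hx ↦ ?_
    exact upComp4_of_sub_lt hc₁ hc₂ hW hx

end UpComp4

section Manifold

variable {F : Type*} [NormedAddCommGroup F] [NormedSpace ℝ F]
  {N : Type*} [TopologicalSpace N] [ChartedSpace F N]

theorem finrank_range_mfderiv_comp_le [FiniteDimensional ℝ F] {G H : Type*}
    [NormedAddCommGroup G] [NormedSpace ℝ G] [NormedAddCommGroup H] [NormedSpace ℝ H]
    {V : H → N} {φ : G → H} {p : G}
    (hV : MDifferentiableAt 𝓘(ℝ, H) 𝓘(ℝ, F) V (φ p)) (hφ : DifferentiableAt ℝ φ p) :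
    Module.finrank ℝ (LinearMap.range (mfderiv 𝓘(ℝ, G) 𝓘(ℝ, F) (V ∘ φ) p).toLinearMap) ≤
      Module.finrank ℝ (LinearMap.range (mfderiv 𝓘(ℝ, H) 𝓘(ℝ, F) V (φ p)).toLinearMap) := by
  rw [mfderiv_comp p hV hφ.mdifferentiableAt, ContinuousLinearMap.toLinearMap_comp]
  have : FiniteDimensional ℝ (TangentSpace 𝓘(ℝ, F) (V (φ p))) := ‹FiniteDimensional ℝ F›
  exact Submodule.finrank_mono
    (t := LinearMap.range (mfderiv 𝓘(ℝ, H) 𝓘(ℝ, F) V (φ p)).toLinearMap)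
    (LinearMap.range_comp_le_range _ _)

variable {W₁ W₂ : ℝ × ℝ × ℝ × ℝ → N} {ε : ℝ}

theorem contMDiff_upComp4 (h₁ : ContMDiff 𝓘(ℝ, ℝ × ℝ × ℝ × ℝ) 𝓘(ℝ, F) (⊤ : ℕ∞) W₁)
    (h₂ : ContMDiff 𝓘(ℝ, ℝ × ℝ × ℝ × ℝ) 𝓘(ℝ, F) (⊤ : ℕ∞) W₂) (hc₁ : IsCollared ε W₁)
    (hc₂ : IsCollared ε W₂) (hε : 0 < ε) (hW : ∀ q s t, W₁ (q, 1, s, t) = W₂ (q, 0, s, t)) :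
    ContMDiff 𝓘(ℝ, ℝ × ℝ × ℝ × ℝ) 𝓘(ℝ, F) (⊤ : ℕ∞) (upComp4 W₁ W₂) := by
  intro p
  rcases upComp4_eventuallyEq hc₁ hc₂ hW hε p with h | h
  · exact (h₁.comp (contMDiff_iff_contDiff.mpr (by fun_prop))).contMDiffAt.congr_of_eventuallyEq h
  · exact (h₂.comp (contMDiff_iff_contDiff.mpr (by fun_prop))).contMDiffAt.congr_of_eventuallyEq h

theorem finrank_range_mfderiv_upComp4_le [FiniteDimensional ℝ F] {n : ℕ}
    (h₁ : ContMDiff 𝓘(ℝ, ℝ × ℝ × ℝ × ℝ) 𝓘(ℝ, F) (⊤ : ℕ∞) W₁)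
    (h₂ : ContMDiff 𝓘(ℝ, ℝ × ℝ × ℝ × ℝ) 𝓘(ℝ, F) (⊤ : ℕ∞) W₂)
    (hn₁ : ∀ p, Module.finrank ℝ
      (LinearMap.range (mfderiv 𝓘(ℝ, ℝ × ℝ × ℝ × ℝ) 𝓘(ℝ, F) W₁ p).toLinearMap) ≤ n)
    (hn₂ : ∀ p, Module.finrank ℝ
      (LinearMap.range (mfderiv 𝓘(ℝ, ℝ × ℝ × ℝ × ℝ) 𝓘(ℝ, F) W₂ p).toLinearMap) ≤ n)
    (hc₁ : IsCollared ε W₁) (hc₂ : IsCollared ε W₂) (hε : 0 < ε)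
    (hW : ∀ q s t, W₁ (q, 1, s, t) = W₂ (q, 0, s, t)) (p : ℝ × ℝ × ℝ × ℝ) :
    Module.finrank ℝ
      (LinearMap.range (mfderiv 𝓘(ℝ, ℝ × ℝ × ℝ × ℝ) 𝓘(ℝ, F) (upComp4 W₁ W₂) p).toLinearMap) ≤
      n := by
  rcases upComp4_eventuallyEq hc₁ hc₂ hW hε p with h | h
  · rw [h.mfderiv_eq]
    exact (finrank_range_mfderiv_comp_le (h₁.mdifferentiableAt (by simp)) (by fun_prop)).trans
      (hn₁ _)
  · rw [h.mfderiv_eq]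
    exact (finrank_range_mfderiv_comp_le (h₂.mdifferentiableAt (by simp)) (by fun_prop)).trans
      (hn₂ _)

theorem isRank3Homotopy_upComp4 [FiniteDimensional ℝ F] (h₁ : IsRank3Homotopy F W₁)
    (h₂ : IsRank3Homotopy F W₂) (hW : ∀ q s t, W₁ (q, 1, s, t) = W₂ (q, 0, s, t)) :
    IsRank3Homotopy F (upComp4 W₁ W₂) := by
  obtain ⟨⟨hsm₁, ⟨ε₁, hε₁, hc₁⟩, ht₀₁, ht₁₁⟩, hn₁, hlam₁, -, hs₀₁, hs₁₁, hrk₀₁, hrk₁₁⟩ := h₁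
  obtain ⟨⟨hsm₂, ⟨ε₂, hε₂, hc₂⟩, ht₀₂, ht₁₂⟩, hn₂, -, hlam₂, hs₀₂, hs₁₂, -, -⟩ := h₂
  set ε := min (min ε₁ ε₂) (1 / 2)
  have hε : 0 < ε := lt_min (lt_min hε₁ hε₂) one_half_pos
  have hc₁ : IsCollared ε W₁ := IsCollared.mono hc₁ ((min_le_left _ _).trans (min_le_left _ _))
  have hc₂ : IsCollared ε W₂ := IsCollared.mono hc₂ ((min_le_left _ _).trans (min_le_right _ _))
  have ht₀ (q r s : ℝ) : upComp4 W₁ W₂ (q, r, s, 0) = W₁ (0, 0, 0, 0) :=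
    upComp4_eq_of_forall (hW q s 0) (fun r ↦ ht₀₁ q r s 0 0 0) (fun r ↦ ht₀₂ q r s q 0 s)
  have ht₁ (q r s : ℝ) : upComp4 W₁ W₂ (q, r, s, 1) = W₁ (0, 0, 0, 1) :=
    upComp4_eq_of_forall (hW q s 1) (fun r ↦ ht₁₁ q r s 0 0 0) (fun r ↦ ht₁₂ q r s q 0 s)
  have hs₀ (q r t : ℝ) : upComp4 W₁ W₂ (q, r, 0, t) = W₁ (q, 0, 0, t) :=
    upComp4_eq_of_forall (hW q 0 t) (fun r ↦ hs₀₁ q r 0 t) (fun r ↦ hs₀₂ q r 0 t)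
  have hs₁ (q r t : ℝ) : upComp4 W₁ W₂ (q, r, 1, t) = W₁ (q, 0, 1, t) :=
    upComp4_eq_of_forall (hW q 1 t) (fun r ↦ hs₁₁ q r 0 t) (fun r ↦ hs₁₂ q r 0 t)
  refine ⟨⟨contMDiff_upComp4 hsm₁ hsm₂ hc₁ hc₂ hε hW,
      ⟨ε / 2, half_pos hε, upComp4_isCollared hc₁ hc₂ hε.le (min_le_right _ _)⟩,
      fun q r s q' r' s' ↦ by rw [ht₀, ht₀], fun q r s q' r' s' ↦ by rw [ht₁, ht₁]⟩,
    finrank_range_mfderiv_upComp4_le hsm₁ hsm₂ hn₁ hn₂ hc₁ hc₂ hε hW, ?_, ?_,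
    fun q r r' t ↦ by rw [hs₀, hs₀], fun q r r' t ↦ by rw [hs₁, hs₁], ?_, ?_⟩
  · simpa only [upComp4_zero] using hlam₁
  · simpa only [upComp4_one] using hlam₂
  · simpa only [upComp4_zero] using hrk₀₁
  · simpa only [upComp4_zero] using hrk₁₁

theorem IsRank3Homotopy.isGoodThreePath_slice {W : ℝ × ℝ × ℝ × ℝ → N}
    (hW : IsRank3Homotopy F W) (q : ℝ) : IsGoodThreePath F fun p ↦ W (q, p) := by
  obtain ⟨⟨hs, ⟨ε, hε, -, -, hr₀, hr₁, hs₀, hs₁, ht₀, ht₁⟩, he₀, he₁⟩, -, -, -, hi₀, hi₁, -, -⟩ :=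
    hW
  exact ⟨⟨hs.comp (contMDiff_iff_contDiff.mpr (by fun_prop)),
      ⟨ε, hε, hr₀ q, hr₁ q, hs₀ q, hs₁ q, ht₀ q, ht₁ q⟩,
      fun r s r' s' ↦ he₀ q r s q r' s', fun r s r' s' ↦ he₁ q r s q r' s'⟩,
    hi₀ q, hi₁ q⟩

variable {J₁ J₁' J₂ J₂' : ℝ × ℝ × ℝ → N}

theorem Rank3HomotopyFrom.left_eq {W : ℝ × ℝ × ℝ × ℝ → N} (h : Rank3HomotopyFrom F W J₁ J₁') :
    J₁ = fun p ↦ W (0, p) :=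
  funext fun p ↦ (h.2.1 p.1 p.2.1 p.2.2).symm

theorem Rank3HomotopyFrom.right_eq {W : ℝ × ℝ × ℝ × ℝ → N} (h : Rank3HomotopyFrom F W J₁ J₁') :
    J₁' = fun p ↦ W (1, p) :=
  funext fun p ↦ (h.2.2 p.1 p.2.1 p.2.2).symm

theorem Rank3HomotopyFrom.isGoodThreePath_left {W : ℝ × ℝ × ℝ × ℝ → N}
    (h : Rank3HomotopyFrom F W J₁ J₁') : IsGoodThreePath F J₁ :=
  h.left_eq ▸ h.1.isGoodThreePath_slice 0

theorem Rank3HomotopyFrom.isGoodThreePath_right {W : ℝ × ℝ × ℝ × ℝ → N}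
    (h : Rank3HomotopyFrom F W J₁ J₁') : IsGoodThreePath F J₁' :=
  h.right_eq ▸ h.1.isGoodThreePath_slice 1

theorem rank3HomotopyFrom_upComp4 [FiniteDimensional ℝ F] (h₁ : Rank3HomotopyFrom F W₁ J₁ J₁')
    (h₂ : Rank3HomotopyFrom F W₂ J₂ J₂') (hW : ∀ q s t, W₁ (q, 1, s, t) = W₂ (q, 0, s, t)) :
    Rank3HomotopyFrom F (upComp4 W₁ W₂) (upComp J₁ J₂) (upComp J₁' J₂') := by
  rw [h₁.left_eq, h₁.right_eq, h₂.left_eq, h₂.right_eq]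
  exact ⟨isRank3Homotopy_upComp4 h₁.1 h₂.1 hW, fun _ _ _ ↦ rfl, fun _ _ _ ↦ rfl⟩

end Manifold

theorem upComp_rank3Homotopic (J₁ J₁' J₂ J₂' : ℝ × ℝ × ℝ → M) (W₁ W₂ : ℝ × ℝ × ℝ × ℝ → M)
    (hW₁ : Rank3HomotopyFrom E W₁ J₁ J₁') (hW₂ : Rank3HomotopyFrom E W₂ J₂ J₂')
    (hW : ∀ q s t, W₁ (q, 1, s, t) = W₂ (q, 0, s, t)) :
    IsGoodThreePath E (upComp J₁ J₂) ∧ IsGoodThreePath E (upComp J₁' J₂') ∧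
      Rank3Homotopic E (upComp J₁ J₂) (upComp J₁' J₂') := by
  have hW₁₂ := rank3HomotopyFrom_upComp4 hW₁ hW₂ hW
  exact ⟨hW₁₂.isGoodThreePath_left, hW₁₂.isGoodThreePath_right, _, hW₁₂⟩
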